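/- Let w, w′ ∈ Sₙ and k, m positive integers. Then w →_{c[k,m]} w′ if and only if there is a path w = w⁽⁰⁾, w⁽¹⁾, …, w⁽ᵐ⁾ = w′ of length m in the k-Bruhat order (with w⁽ⁱ⁾ = w⁽ⁱ⁻¹⁾·t_{aᵢ,bᵢ}, aᵢ ≤ k < bᵢ, ℓ(w⁽ⁱ⁾) = ℓ(w⁽ⁱ⁻¹⁾)+1) whose labels are strictly decreasing: w⁽¹⁾(a₁) > w⁽²⁾(a₂) > ⋯ > w⁽ᵐ⁾(a_m). Moreover, such a path, when it exists, is unique. -/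

import Mathlib

open Equiv MvPolynomial

attribute [local instance] Classical.propDecidable

namespace SchubertPieri

/-- Position `j ∈ {1,…,N}` (1-indexed) as an element of `Fin N` (0-indexed). -/
def pos (N : ℕ) [NeZero N] (j : ℕ) : Fin N :=
  ⟨(j - 1) % N, Nat.mod_lt _ (Nat.pos_of_ne_zero (NeZero.ne N))⟩

/-- The transposition `t_{a,b}` interchanging positions `a` and `b` (1-indexed). -/
def t (N : ℕ) [NeZero N] (a b : ℕ) : Equiv.Perm (Fin N) :=
  Equiv.swap (pos N a) (pos N b)

/-- The value `w(j)` for `j ∈ {1,…,N}` (1-indexed). -/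
def val {N : ℕ} [NeZero N] (w : Equiv.Perm (Fin N)) (j : ℕ) : ℕ :=
  (w (pos N j) : ℕ) + 1

/-- The length of `w`: its number of inversions. -/
def len {N : ℕ} (w : Equiv.Perm (Fin N)) : ℕ :=
  (Finset.univ.filter fun p : Fin N × Fin N => p.1 < p.2 ∧ w p.2 < w p.1).card

/-- The longest permutation `w₀ : j ↦ N+1-j`. -/
def w0 (N : ℕ) : Equiv.Perm (Fin N) :=
  ⟨Fin.rev, Fin.rev, Fin.rev_rev, Fin.rev_rev⟩

/-- The product `t_{a 0, b 0} ⋯ t_{a (i-1), b (i-1)}`. -/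
def tProd (N : ℕ) [NeZero N] (a b : ℕ → ℕ) (i : ℕ) : Equiv.Perm (Fin N) :=
  ((List.range i).map fun j => t N (a j) (b j)).prod

/-- `r[k,m] = t_{k,k+1} t_{k,k+2} ⋯ t_{k,k+m}`, the (m+1)-cycle with
`r[k,m](k) = k+m` and `r[k,m](j) = j-1` for `k+1 ≤ j ≤ k+m`. -/
def rPerm (N k m : ℕ) [NeZero N] : Equiv.Perm (Fin N) :=
  ((List.range m).map fun i => t N k (k + 1 + i)).prod

/-- `c[k,m] = t_{k,k+1} t_{k-1,k+1} ⋯ t_{k-m+1,k+1}`, the (m+1)-cycle with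
`c[k,m](j) = j+1` for `k-m+1 ≤ j ≤ k` and `c[k,m](k+1) = k-m+1`. -/
def cPerm (N k m : ℕ) [NeZero N] : Equiv.Perm (Fin N) :=
  ((List.range m).map fun i => t N (k - i) (k + 1)).prod

/-- The conditions that `aᵢ ≤ k < bᵢ` (with all indices in `{1,…,N}`) and that
`ℓ(w t_{a₁ b₁} ⋯ t_{aᵢ bᵢ}) = ℓ(w) + i` for `1 ≤ i ≤ m`. -/
def StepOK (N k m : ℕ) [NeZero N] (w : Equiv.Perm (Fin N)) (a b : ℕ → ℕ) : Prop :=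
  (∀ i, i < m → 1 ≤ a i ∧ a i ≤ k ∧ k < b i ∧ b i ≤ N) ∧
  (∀ i, i ≤ m → len (w * tProd N a b i) = len w + i)

/-- `w →_{r[k,m]} w'`. -/
def RelR (N k m : ℕ) [NeZero N] (w w' : Equiv.Perm (Fin N)) : Prop :=
  ∃ a b : ℕ → ℕ, StepOK N k m w a b ∧ w' = w * tProd N a b m ∧
    (∀ i j, i < m → j < m → i ≠ j → b i ≠ b j)

/-- `w →_{c[k,m]} w'`. -/
def RelC (N k m : ℕ) [NeZero N] (w w' : Equiv.Perm (Fin N)) : Prop :=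
  ∃ a b : ℕ → ℕ, StepOK N k m w a b ∧ w' = w * tProd N a b m ∧
    (∀ i j, i < m → j < m → i ≠ j → a i ≠ a j)

/-- The divided difference operator `∂ᵢ f = (f - sᵢ·f)/(xᵢ - xᵢ₊₁)` (1-indexed `i`);
the quotient is exact, and is recovered here as the (unique) witness of divisibility. -/
noncomputable def divDiff {N : ℕ} [NeZero N] (i : ℕ) (f : MvPolynomial (Fin N) ℤ) :
    MvPolynomial (Fin N) ℤ :=
  if h : (X (pos N i) - X (pos N (i + 1))) ∣ (f - rename (⇑(t N i (i + 1))) f) then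
    h.choose
  else 0

/-- `∂_{a₁} ∘ ⋯ ∘ ∂_{a_p}` applied to `f`, for a word `l = [a₁,…,a_p]`. -/
noncomputable def divDiffWord {N : ℕ} [NeZero N] (l : List ℕ) (f : MvPolynomial (Fin N) ℤ) :
    MvPolynomial (Fin N) ℤ :=
  l.foldr divDiff f

/-- Auxiliary: produce a reduced word for `w` by repeatedly removing a descent. -/
def redWordAux (N : ℕ) [NeZero N] : ℕ → Equiv.Perm (Fin N) → List ℕ
  | 0, _ => []
  | fuel + 1, w =>
    match ((List.range (N - 1)).map (· + 1)).find? (fun i => decide (val w (i + 1) < val w i)) with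
    | none => []
    | some i => redWordAux N fuel (w * t N i (i + 1)) ++ [i]

/-- A canonical reduced word `(a₁,…,a_p)` for `w`, i.e. `w = s_{a₁} ⋯ s_{a_p}` with `p = ℓ(w)`. -/
def redWord (N : ℕ) [NeZero N] (w : Equiv.Perm (Fin N)) : List ℕ :=
  redWordAux N (N * N) w

/-- The staircase monomial `x₁^{N-1} x₂^{N-2} ⋯ x_{N-1}`. -/
noncomputable def staircase (N : ℕ) : MvPolynomial (Fin N) ℤ :=
  ∏ i : Fin N, X i ^ (N - 1 - (i : ℕ))

/-- The Schubert polynomial `𝔖_w = ∂_{w⁻¹w₀}(x₁^{N-1} ⋯ x_{N-1})`. -/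
noncomputable def schubertPoly (N : ℕ) [NeZero N] (w : Equiv.Perm (Fin N)) :
    MvPolynomial (Fin N) ℤ :=
  divDiffWord (redWord N (w⁻¹ * w0 N)) (staircase N)

/-- The ideal of `Rₙ` generated by the symmetric polynomials with zero constant term. -/
noncomputable def symIdeal (N : ℕ) : Ideal (MvPolynomial (Fin N) ℤ) :=
  Ideal.span {f : MvPolynomial (Fin N) ℤ | f.IsSymmetric ∧ constantCoeff f = 0}

/-- The ring `Hₙ = Rₙ/𝒮`. -/
abbrev HRing (N : ℕ) := MvPolynomial (Fin N) ℤ ⧸ symIdeal N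

/-- The class of the Schubert polynomial `𝔖_w` in `Hₙ`. -/
noncomputable def SS (N : ℕ) [NeZero N] (w : Equiv.Perm (Fin N)) : HRing N :=
  Ideal.Quotient.mk (symIdeal N) (schubertPoly N w)

/-- The complete homogeneous symmetric polynomial of degree `m` in `x₁,…,x_k`. -/
noncomputable def hPoly (N k m : ℕ) : MvPolynomial (Fin N) ℤ :=
  ∑ s ∈ (Finset.univ.filter fun i : Fin N => (i : ℕ) < k).sym m,
    (Multiset.map X (s : Multiset (Fin N))).prod

/-- The elementary symmetric polynomial of degree `m` in `x₁,…,x_k`. -/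
noncomputable def ePoly (N k m : ℕ) : MvPolynomial (Fin N) ℤ :=
  ∑ s ∈ (Finset.univ.filter fun i : Fin N => (i : ℕ) < k).powersetCard m, ∏ i ∈ s, X i

/-- Covering relation of the `k`-Bruhat order. -/
def kCover (N k : ℕ) [NeZero N] (w w' : Equiv.Perm (Fin N)) : Prop :=
  ∃ a b : ℕ, 1 ≤ a ∧ a ≤ k ∧ k < b ∧ b ≤ N ∧ w' = w * t N a b ∧ len w' = len w + 1

/-- The (strict) `k`-Bruhat order `<ₖ`. -/
def kBruhat (N k : ℕ) [NeZero N] : Equiv.Perm (Fin N) → Equiv.Perm (Fin N) → Prop :=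
  Relation.TransGen (kCover N k)

/-- The label `w⁽ⁱ⁺¹⁾(a_{i+1})` (0-indexed `i`) of the `(i+1)`-st step of a path. -/
def label {N : ℕ} [NeZero N] (w : Equiv.Perm (Fin N)) (a b : ℕ → ℕ) (i : ℕ) : ℕ :=
  val (w * tProd N a b (i + 1)) (a i)

/-- `(a,b)` encodes a path of length `m` in the `k`-Bruhat order from `w` to `w'`
(normalized so that `a i = b i = 0` for `i ≥ m`, making the encoding unique). -/
def PathWit (N k m : ℕ) [NeZero N] (w w' : Equiv.Perm (Fin N))
    (ab : (ℕ → ℕ) × (ℕ → ℕ)) : Prop :=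
  StepOK N k m w ab.1 ab.2 ∧ w' = w * tProd N ab.1 ab.2 m ∧
    ∀ i, m ≤ i → ab.1 i = 0 ∧ ab.2 i = 0

/-- Paths of length `m` in the `k`-Bruhat order from `w` to `w'` with strictly
increasing labels. -/
def IncPaths (N k m : ℕ) [NeZero N] (w w' : Equiv.Perm (Fin N)) :
    Set ((ℕ → ℕ) × (ℕ → ℕ)) :=
  {ab | PathWit N k m w w' ab ∧
    ∀ i j, i < j → j < m → label w ab.1 ab.2 i < label w ab.1 ab.2 j}

/-- Paths of length `m` in the `k`-Bruhat order from `w` to `w'` with strictly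
decreasing labels. -/
def DecPaths (N k m : ℕ) [NeZero N] (w w' : Equiv.Perm (Fin N)) :
    Set ((ℕ → ℕ) × (ℕ → ℕ)) :=
  {ab | PathWit N k m w w' ab ∧
    ∀ i j, i < j → j < m → label w ab.1 ab.2 j < label w ab.1 ab.2 i}


/-- The cycle `(x₁ x₂ … x_r)` (sending `x₁ ↦ x₂ ↦ ⋯ ↦ x_r ↦ x₁`), as a product
of transpositions. -/
def cycleList (N : ℕ) [NeZero N] (l : List ℕ) : Equiv.Perm (Fin N) :=
  ((l.zip l.tail).map fun p => t N p.1 p.2).prod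

/-- The Grassmannian permutation `h[k;p,q]` of descent `k` and hook shape `(p,1^{q-1})`:
the `(p+q)`-cycle `(k-q+1  k-q+2 … k  k+p  k+p-1 … k+1)`. -/
def hookPerm (N k p q : ℕ) [NeZero N] : Equiv.Perm (Fin N) :=
  cycleList N (((List.range q).map fun i => k - q + 1 + i) ++
    ((List.range p).reverse.map fun i => k + 1 + i))

/-- `w|ₚ ∈ S_{N-1}`: delete row `p` and column `w(p)` from the permutation matrix of `w`. -/
def drop {N : ℕ} (w : Equiv.Perm (Fin (N + 1))) (p : Fin (N + 1)) : Equiv.Perm (Fin N) :=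
  Equiv.removeNone (((finSuccEquiv' p).symm.trans (w : Fin (N + 1) ≃ Fin (N + 1))).trans
    (finSuccEquiv' (w p)))

/-- `lam` is a partition with at most `k` parts (1-indexed parts `lam 1 ≥ lam 2 ≥ ⋯`,
normalized by `lam 0 = 0`). -/
def IsPartFun (k : ℕ) (lam : ℕ → ℕ) : Prop :=
  lam 0 = 0 ∧ (∀ j, 1 ≤ j → lam (j + 1) ≤ lam j) ∧ ∀ j, k < j → lam j = 0

/-- `h_d(x₁,…,x_k)` for an integer `d`, with `h_d = 0` for `d < 0`. -/
noncomputable def hPolyZ (N k : ℕ) (d : ℤ) : MvPolynomial (Fin N) ℤ :=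
  if 0 ≤ d then hPoly N k d.toNat else 0

/-- The Schur polynomial `s_λ(x₁,…,x_k)`, via the Jacobi–Trudi determinant
`det(h_{λᵢ+j-i})_{1 ≤ i,j ≤ k}`. -/
noncomputable def schurPoly (N k : ℕ) (lam : ℕ → ℕ) : MvPolynomial (Fin N) ℤ :=
  (Matrix.of fun i j : Fin k =>
    hPolyZ N k ((lam ((i : ℕ) + 1) : ℤ) + (j : ℕ) - (i : ℕ))).det

/-- `r_j = #{i : aᵢ = j}` (with `i` ranging over `0,…,m-1`, 0-indexed). -/
def rJ (a : ℕ → ℕ) (m j : ℕ) : ℕ := ((Finset.range m).filter fun i => a i = j).card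

/-- `μ_j = r_{j+1} + ⋯ + r_k`. -/
def muJ (a : ℕ → ℕ) (m k j : ℕ) : ℕ :=
  if j = 0 then 0 else ∑ j' ∈ Finset.Icc (j + 1) k, rJ a m j'

/-- `λ_j = μ_j + r_j`. -/
def lamJ (a : ℕ → ℕ) (m k j : ℕ) : ℕ :=
  if j = 0 then 0 else muJ a m k j + rJ a m j

/-- `d_j = #{i : bᵢ = N+1-j}` (with `i` ranging over `0,…,m-1`, 0-indexed). -/
def dJ (b : ℕ → ℕ) (m N j : ℕ) : ℕ :=
  ((Finset.range m).filter fun i => b i = N + 1 - j).card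

/-- `μ′_j = d_{j+1} + ⋯ + d_{N-k}`. -/
def muJ' (b : ℕ → ℕ) (m N k j : ℕ) : ℕ :=
  if j = 0 then 0 else ∑ j' ∈ Finset.Icc (j + 1) (N - k), dJ b m N j'

/-- `λ′_j = μ′_j + d_j`. -/
def lamJ' (b : ℕ → ℕ) (m N k j : ℕ) : ℕ :=
  if j = 0 then 0 else muJ' b m N k j + dJ b m N j

/-- The conjugate (transpose) partition: `νᵗ_j = #{i : νᵢ ≥ j}`, for `ν` with at
most `k` parts. -/
def conjPart (k : ℕ) (nu : ℕ → ℕ) (j : ℕ) : ℕ :=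
  if j = 0 then 0 else ((Finset.Icc 1 k).filter fun i => j ≤ nu i).card

/-- `wv` is the Grassmannian permutation of descent `k` and shape `nu`:
`wv(j) = j + ν_{k+1-j}` for `1 ≤ j ≤ k`, and `wv` is increasing on `{k+1,…,N}`. -/
def IsGrassOf (N k : ℕ) [NeZero N] (nu : ℕ → ℕ) (wv : Equiv.Perm (Fin N)) : Prop :=
  (∀ j, 1 ≤ j → j ≤ k → val wv j = j + nu (k + 1 - j)) ∧
  (∀ j, k < j → j < N → val wv j < val wv (j + 1))

/-- Paths of length `m` in the `k`-Bruhat order from `w` to `w'` whose labels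
increase strictly for the first `p` steps and decrease strictly thereafter
(positions `p, p+1, …, m` being decreasing, 1-indexed). -/
def IncDecPaths (N k m p : ℕ) [NeZero N] (w w' : Equiv.Perm (Fin N)) :
    Set ((ℕ → ℕ) × (ℕ → ℕ)) :=
  {ab | PathWit N k m w w' ab ∧
    (∀ i j, i < j → j < p → label w ab.1 ab.2 i < label w ab.1 ab.2 j) ∧
    (∀ i j, p - 1 ≤ i → i < j → j < m → label w ab.1 ab.2 j < label w ab.1 ab.2 i)}

/-- Paths of length `m` in the `k`-Bruhat order from `w` to `w'` whose labels
decrease strictly for the first `q` steps and increase strictly thereafter. -/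
def DecIncPaths (N k m q : ℕ) [NeZero N] (w w' : Equiv.Perm (Fin N)) :
    Set ((ℕ → ℕ) × (ℕ → ℕ)) :=
  {ab | PathWit N k m w w' ab ∧
    (∀ i j, i < j → j < q → label w ab.1 ab.2 j < label w ab.1 ab.2 i) ∧
    (∀ i j, q - 1 ≤ i → i < j → j < m → label w ab.1 ab.2 i < label w ab.1 ab.2 j)}



section ProofDev
variable {N : ℕ} [NeZero N]

lemma pos_coe {j : ℕ} (h1 : 1 ≤ j) (h2 : j ≤ N) : (pos N j : ℕ) = j - 1 := by
  have hN : 0 < N := Nat.pos_of_ne_zero (NeZero.ne N)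
  simp only [pos]
  exact Nat.mod_eq_of_lt (by omega)

lemma pos_inj {i j : ℕ} (hi1 : 1 ≤ i) (hi2 : i ≤ N) (hj1 : 1 ≤ j) (hj2 : j ≤ N)
    (h : pos N i = pos N j) : i = j := by
  have h1 := pos_coe (N := N) hi1 hi2
  have h2 := pos_coe (N := N) hj1 hj2
  have : (pos N i : ℕ) = (pos N j : ℕ) := by rw [h]
  omega

lemma pos_lt {i j : ℕ} (hi1 : 1 ≤ i) (hij : i < j) (hj2 : j ≤ N) :
    pos N i < pos N j := by
  have h1 := pos_coe (N := N) hi1 (by omega)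
  have h2 := pos_coe (N := N) (by omega : 1 ≤ j) hj2
  simp only [Fin.lt_def]
  omega

lemma tProd_zero (a b : ℕ → ℕ) : tProd N a b 0 = 1 := rfl

lemma tProd_succ (a b : ℕ → ℕ) (i : ℕ) :
    tProd N a b (i + 1) = tProd N a b i * t N (a i) (b i) := by
  simp [tProd, List.range_succ]

lemma tProd_congr {a b a' b' : ℕ → ℕ} {i : ℕ}
    (h : ∀ j, j < i → a j = a' j ∧ b j = b' j) :
    tProd N a b i = tProd N a' b' i := by
  induction i with
  | zero => rfl
  | succ i ih =>
    rw [tProd_succ, tProd_succ, ih (fun j hj => h j (by omega)),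
      (h i (by omega)).1, (h i (by omega)).2]

lemma tProd_shift (a b : ℕ → ℕ) (i : ℕ) :
    tProd N a b (i + 1) =
      t N (a 0) (b 0) * tProd N (fun j => a (j + 1)) (fun j => b (j + 1)) i := by
  simp only [tProd, List.range_succ_eq_map, List.map_cons, List.prod_cons, List.map_map]
  rfl


/-- The covering criterion predicate. -/
def Cov {N : ℕ} (v : Equiv.Perm (Fin N)) (x y : Fin N) : Prop :=
  v x < v y ∧ ∀ e, x < e → e < y → ¬(v x < v e ∧ v e < v y)

lemma ite_tri {a b c : Fin N} (hac : a < c) (hba : b ≠ a) (hbc : b ≠ c) :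
    ((if a < b then 1 else 0) + (if b < c then 1 else 0) =
      1 + (if a < b ∧ b < c then 1 else 0)) ∧
    ((if b < a then 1 else 0) + (if c < b then 1 else 0) +
      (if a < b ∧ b < c then 1 else 0) = 1) := by
  have h1 : (a : ℕ) < c := hac
  have h2 : (b : ℕ) ≠ a := fun h => hba (Fin.ext h)
  have h3 : (b : ℕ) ≠ c := fun h => hbc (Fin.ext h)
  simp only [Fin.lt_def]
  constructor <;> (split_ifs <;> omega)

lemma flip_iff {x y : Fin N} (hxy : x < y) {q1 q2 : Fin N} (h : q1 < q2) :
    (Equiv.swap x y q2 < Equiv.swap x y q1) ↔ ((q1 = x ∧ q2 ≤ y) ∨ (q2 = y ∧ x ≤ q1)) := by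
  simp only [Equiv.swap_apply_def]
  have h' : (q1:ℕ) < q2 := h
  have hxy' : (x:ℕ) < y := hxy
  split_ifs <;> (simp only [Fin.lt_def, Fin.le_def, Fin.ext_iff] at * <;> omega)

lemma len_mul_swap (v : Equiv.Perm (Fin N)) {x y : Fin N} (hxy : x < y) (hv : v x < v y) :
    len (v * Equiv.swap x y) = len v + 1 +
      2 * (Finset.univ.filter fun e : Fin N => x < e ∧ e < y ∧ v x < v e ∧ v e < v y).card := by
  classical
  have hsinv : ∀ p : Fin N, Equiv.swap x y (Equiv.swap x y p) = p :=
    fun p => Equiv.swap_apply_self x y p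
  have hsInj : Function.Injective (Equiv.swap x y) := (Equiv.swap x y).injective
  have hvInj : Function.Injective v := v.injective
  -- Step A: change of variables
  have hA : len (v * Equiv.swap x y) = (Finset.univ.filter
      fun p : Fin N × Fin N => Equiv.swap x y p.1 < Equiv.swap x y p.2 ∧ v p.2 < v p.1).card := by
    have h0 : len (v * Equiv.swap x y) = (Finset.univ.filter
        fun p : Fin N × Fin N => p.1 < p.2 ∧ v (Equiv.swap x y p.2) < v (Equiv.swap x y p.1)).card := rfl
    rw [h0]
    apply Finset.card_nbij' (fun p => (Equiv.swap x y p.1, Equiv.swap x y p.2))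
      (fun p => (Equiv.swap x y p.1, Equiv.swap x y p.2))
    · intro p hp
      simp only [Finset.mem_coe, Finset.mem_filter, Finset.mem_univ, true_and] at hp ⊢
      rw [hsinv, hsinv]
      exact hp
    · intro p hp
      simp only [Finset.mem_coe, Finset.mem_filter, Finset.mem_univ, true_and] at hp ⊢
      rw [hsinv, hsinv]
      exact hp
    · intro p _; simp [hsinv]
    · intro p _; simp [hsinv]
  have hlenv : len v = (Finset.univ.filter
      fun p : Fin N × Fin N => p.1 < p.2 ∧ v p.2 < v p.1).card := rfl
  -- Step B: splits
  have hsplit1 : (Finset.univ.filter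
      fun p : Fin N × Fin N => Equiv.swap x y p.1 < Equiv.swap x y p.2 ∧ v p.2 < v p.1).card
      = (Finset.univ.filter fun p : Fin N × Fin N =>
          (Equiv.swap x y p.1 < Equiv.swap x y p.2 ∧ v p.2 < v p.1) ∧ (p.1 < p.2)).card
      + (Finset.univ.filter fun p : Fin N × Fin N =>
          (Equiv.swap x y p.1 < Equiv.swap x y p.2 ∧ v p.2 < v p.1) ∧ ¬(p.1 < p.2)).card := by
    have h := Finset.card_filter_add_card_filter_not
      (s := Finset.univ.filter fun p : Fin N × Fin N =>
        Equiv.swap x y p.1 < Equiv.swap x y p.2 ∧ v p.2 < v p.1)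
      (p := fun p : Fin N × Fin N => p.1 < p.2)
    rw [Finset.filter_filter, Finset.filter_filter] at h
    exact h.symm
  have hsplit2 : (Finset.univ.filter
      fun p : Fin N × Fin N => p.1 < p.2 ∧ v p.2 < v p.1).card
      = (Finset.univ.filter fun p : Fin N × Fin N =>
          (p.1 < p.2 ∧ v p.2 < v p.1) ∧ (Equiv.swap x y p.1 < Equiv.swap x y p.2)).card
      + (Finset.univ.filter fun p : Fin N × Fin N =>
          (p.1 < p.2 ∧ v p.2 < v p.1) ∧ ¬(Equiv.swap x y p.1 < Equiv.swap x y p.2)).card := by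
    have h := Finset.card_filter_add_card_filter_not
      (s := Finset.univ.filter fun p : Fin N × Fin N => p.1 < p.2 ∧ v p.2 < v p.1)
      (p := fun p : Fin N × Fin N => Equiv.swap x y p.1 < Equiv.swap x y p.2)
    rw [Finset.filter_filter, Finset.filter_filter] at h
    exact h.symm
  have hcommon : (Finset.univ.filter fun p : Fin N × Fin N =>
          (Equiv.swap x y p.1 < Equiv.swap x y p.2 ∧ v p.2 < v p.1) ∧ (p.1 < p.2))
      = (Finset.univ.filter fun p : Fin N × Fin N =>
          (p.1 < p.2 ∧ v p.2 < v p.1) ∧ (Equiv.swap x y p.1 < Equiv.swap x y p.2)) := by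
    ext p
    simp only [Finset.mem_filter, Finset.mem_univ, true_and]
    tauto
  -- Step C: the two difference sets
  have hR1 : (Finset.univ.filter fun p : Fin N × Fin N =>
        (Equiv.swap x y p.1 < Equiv.swap x y p.2 ∧ v p.2 < v p.1) ∧ ¬(p.1 < p.2)).card
      = (Finset.univ.filter fun q : Fin N × Fin N =>
        (q.1 < q.2 ∧ Equiv.swap x y q.2 < Equiv.swap x y q.1) ∧ v q.1 < v q.2).card := by
    apply Finset.card_nbij' (fun p => (p.2, p.1)) (fun p => (p.2, p.1))
    · intro p hp
      simp only [Finset.mem_coe, Finset.mem_filter, Finset.mem_univ, true_and] at hp ⊢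
      obtain ⟨⟨h1, h2⟩, h3⟩ := hp
      have hne : p.2 ≠ p.1 := fun hh => by rw [hh] at h2; exact lt_irrefl _ h2
      exact ⟨⟨lt_of_le_of_ne (le_of_not_gt h3) hne, h1⟩, h2⟩
    · intro p hp
      simp only [Finset.mem_coe, Finset.mem_filter, Finset.mem_univ, true_and] at hp ⊢
      obtain ⟨⟨h1, h2⟩, h3⟩ := hp
      exact ⟨⟨h2, h3⟩, not_lt.mpr (le_of_lt h1)⟩
    · intro p _; rfl
    · intro p _; rfl
  have hR2 : (Finset.univ.filter fun p : Fin N × Fin N =>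
        (p.1 < p.2 ∧ v p.2 < v p.1) ∧ ¬(Equiv.swap x y p.1 < Equiv.swap x y p.2))
      = (Finset.univ.filter fun q : Fin N × Fin N =>
        (q.1 < q.2 ∧ Equiv.swap x y q.2 < Equiv.swap x y q.1) ∧ v q.2 < v q.1) := by
    ext p
    simp only [Finset.mem_filter, Finset.mem_univ, true_and]
    constructor
    · rintro ⟨⟨h1, h2⟩, h3⟩
      have hne : Equiv.swap x y p.2 ≠ Equiv.swap x y p.1 :=
        fun hh => (ne_of_lt h1) (hsInj hh).symm
      exact ⟨⟨h1, lt_of_le_of_ne (le_of_not_gt h3) hne⟩, h2⟩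
    · rintro ⟨⟨h1, h2⟩, h3⟩
      exact ⟨⟨h1, h3⟩, not_lt.mpr (le_of_lt h2)⟩
  -- Step D: decompose by q.1 = x
  have hsplitR1 : (Finset.univ.filter fun q : Fin N × Fin N =>
        (q.1 < q.2 ∧ Equiv.swap x y q.2 < Equiv.swap x y q.1) ∧ v q.1 < v q.2).card
      = (Finset.univ.filter fun q : Fin N × Fin N =>
          (((q.1 < q.2 ∧ Equiv.swap x y q.2 < Equiv.swap x y q.1) ∧ v q.1 < v q.2)) ∧ q.1 = x).card
      + (Finset.univ.filter fun q : Fin N × Fin N =>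
          (((q.1 < q.2 ∧ Equiv.swap x y q.2 < Equiv.swap x y q.1) ∧ v q.1 < v q.2)) ∧ ¬(q.1 = x)).card := by
    have h := Finset.card_filter_add_card_filter_not
      (s := Finset.univ.filter fun q : Fin N × Fin N =>
        (q.1 < q.2 ∧ Equiv.swap x y q.2 < Equiv.swap x y q.1) ∧ v q.1 < v q.2)
      (p := fun q : Fin N × Fin N => q.1 = x)
    rw [Finset.filter_filter, Finset.filter_filter] at h
    exact h.symm
  have hsplitR2 : (Finset.univ.filter fun q : Fin N × Fin N =>
        (q.1 < q.2 ∧ Equiv.swap x y q.2 < Equiv.swap x y q.1) ∧ v q.2 < v q.1).card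
      = (Finset.univ.filter fun q : Fin N × Fin N =>
          (((q.1 < q.2 ∧ Equiv.swap x y q.2 < Equiv.swap x y q.1) ∧ v q.2 < v q.1)) ∧ q.1 = x).card
      + (Finset.univ.filter fun q : Fin N × Fin N =>
          (((q.1 < q.2 ∧ Equiv.swap x y q.2 < Equiv.swap x y q.1) ∧ v q.2 < v q.1)) ∧ ¬(q.1 = x)).card := by
    have h := Finset.card_filter_add_card_filter_not
      (s := Finset.univ.filter fun q : Fin N × Fin N =>
        (q.1 < q.2 ∧ Equiv.swap x y q.2 < Equiv.swap x y q.1) ∧ v q.2 < v q.1)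
      (p := fun q : Fin N × Fin N => q.1 = x)
    rw [Finset.filter_filter, Finset.filter_filter] at h
    exact h.symm
  -- Step E: piece counts
  have hR1a : (Finset.univ.filter fun q : Fin N × Fin N =>
        (((q.1 < q.2 ∧ Equiv.swap x y q.2 < Equiv.swap x y q.1) ∧ v q.1 < v q.2)) ∧ q.1 = x).card
      = (Finset.univ.filter fun e : Fin N => x < e ∧ e ≤ y ∧ v x < v e).card := by
    apply Finset.card_nbij' (fun q => q.2) (fun e => (x, e))
    · intro q hq
      simp only [Finset.mem_coe, Finset.mem_filter, Finset.mem_univ, true_and] at hq ⊢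
      obtain ⟨⟨⟨h1, h2⟩, h3⟩, h4⟩ := hq
      refine ⟨by rw [← h4]; exact h1, ?_, by rw [← h4]; exact h3⟩
      rw [h4] at h2 h1
      rcases (flip_iff hxy h1).mp h2 with ⟨_, hy⟩ | ⟨hy, _⟩
      · exact hy
      · exact le_of_eq hy
    · intro e he
      simp only [Finset.mem_coe, Finset.mem_filter, Finset.mem_univ, true_and] at he ⊢
      obtain ⟨h1, h2, h3⟩ := he
      exact ⟨⟨⟨h1, (flip_iff hxy h1).mpr (Or.inl ⟨rfl, h2⟩)⟩, h3⟩, trivial⟩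
    · intro q hq
      simp only [Finset.mem_coe, Finset.mem_filter, Finset.mem_univ, true_and] at hq
      exact Prod.ext hq.2.symm rfl
    · intro e _; rfl
  have hR1b : (Finset.univ.filter fun q : Fin N × Fin N =>
        (((q.1 < q.2 ∧ Equiv.swap x y q.2 < Equiv.swap x y q.1) ∧ v q.1 < v q.2)) ∧ ¬(q.1 = x)).card
      = (Finset.univ.filter fun e : Fin N => x < e ∧ e < y ∧ v e < v y).card := by
    apply Finset.card_nbij' (fun q => q.1) (fun e => (e, y))
    · intro q hq
      simp only [Finset.mem_coe, Finset.mem_filter, Finset.mem_univ, true_and] at hq ⊢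
      obtain ⟨⟨⟨h1, h2⟩, h3⟩, h4⟩ := hq
      rcases (flip_iff hxy h1).mp h2 with ⟨hx', _⟩ | ⟨hy, hx'⟩
      · exact absurd hx' h4
      · rw [hy] at h1 h3
        exact ⟨lt_of_le_of_ne hx' (Ne.symm h4), h1, h3⟩
    · intro e he
      simp only [Finset.mem_coe, Finset.mem_filter, Finset.mem_univ, true_and] at he ⊢
      obtain ⟨h1, h2, h3⟩ := he
      refine ⟨⟨⟨h2, ?_⟩, h3⟩, ne_of_gt h1⟩
      rw [Equiv.swap_apply_right, Equiv.swap_apply_of_ne_of_ne (ne_of_gt h1) (ne_of_lt h2)]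
      exact h1
    · intro q hq
      simp only [Finset.mem_coe, Finset.mem_filter, Finset.mem_univ, true_and] at hq
      obtain ⟨⟨⟨h1, h2⟩, h3⟩, h4⟩ := hq
      rcases (flip_iff hxy h1).mp h2 with ⟨hx', _⟩ | ⟨hy, hx'⟩
      · exact absurd hx' h4
      · exact Prod.ext rfl hy.symm
    · intro e _; rfl
  have hR2a : (Finset.univ.filter fun q : Fin N × Fin N =>
        (((q.1 < q.2 ∧ Equiv.swap x y q.2 < Equiv.swap x y q.1) ∧ v q.2 < v q.1)) ∧ q.1 = x).card
      = (Finset.univ.filter fun e : Fin N => x < e ∧ e ≤ y ∧ v e < v x).card := by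
    apply Finset.card_nbij' (fun q => q.2) (fun e => (x, e))
    · intro q hq
      simp only [Finset.mem_coe, Finset.mem_filter, Finset.mem_univ, true_and] at hq ⊢
      obtain ⟨⟨⟨h1, h2⟩, h3⟩, h4⟩ := hq
      refine ⟨by rw [← h4]; exact h1, ?_, by rw [← h4]; exact h3⟩
      rw [h4] at h2 h1
      rcases (flip_iff hxy h1).mp h2 with ⟨_, hy⟩ | ⟨hy, _⟩
      · exact hy
      · exact le_of_eq hy
    · intro e he
      simp only [Finset.mem_coe, Finset.mem_filter, Finset.mem_univ, true_and] at he ⊢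
      obtain ⟨h1, h2, h3⟩ := he
      exact ⟨⟨⟨h1, (flip_iff hxy h1).mpr (Or.inl ⟨rfl, h2⟩)⟩, h3⟩, trivial⟩
    · intro q hq
      simp only [Finset.mem_coe, Finset.mem_filter, Finset.mem_univ, true_and] at hq
      exact Prod.ext hq.2.symm rfl
    · intro e _; rfl
  have hR2b : (Finset.univ.filter fun q : Fin N × Fin N =>
        (((q.1 < q.2 ∧ Equiv.swap x y q.2 < Equiv.swap x y q.1) ∧ v q.2 < v q.1)) ∧ ¬(q.1 = x)).card
      = (Finset.univ.filter fun e : Fin N => x < e ∧ e < y ∧ v y < v e).card := by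
    apply Finset.card_nbij' (fun q => q.1) (fun e => (e, y))
    · intro q hq
      simp only [Finset.mem_coe, Finset.mem_filter, Finset.mem_univ, true_and] at hq ⊢
      obtain ⟨⟨⟨h1, h2⟩, h3⟩, h4⟩ := hq
      rcases (flip_iff hxy h1).mp h2 with ⟨hx', _⟩ | ⟨hy, hx'⟩
      · exact absurd hx' h4
      · rw [hy] at h1 h3
        exact ⟨lt_of_le_of_ne hx' (Ne.symm h4), h1, h3⟩
    · intro e he
      simp only [Finset.mem_coe, Finset.mem_filter, Finset.mem_univ, true_and] at he ⊢
      obtain ⟨h1, h2, h3⟩ := he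
      refine ⟨⟨⟨h2, ?_⟩, h3⟩, ne_of_gt h1⟩
      rw [Equiv.swap_apply_right, Equiv.swap_apply_of_ne_of_ne (ne_of_gt h1) (ne_of_lt h2)]
      exact h1
    · intro q hq
      simp only [Finset.mem_coe, Finset.mem_filter, Finset.mem_univ, true_and] at hq
      obtain ⟨⟨⟨h1, h2⟩, h3⟩, h4⟩ := hq
      rcases (flip_iff hxy h1).mp h2 with ⟨hx', _⟩ | ⟨hy, hx'⟩
      · exact absurd hx' h4
      · exact Prod.ext rfl hy.symm
    · intro e _; rfl
  -- Step F: remove/insert y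
  have hinscard : (Finset.univ.filter fun e : Fin N => x < e ∧ e ≤ y ∧ v x < v e).card
      = (Finset.univ.filter fun e : Fin N => x < e ∧ e < y ∧ v x < v e).card + 1 := by
    have hins : (Finset.univ.filter fun e : Fin N => x < e ∧ e ≤ y ∧ v x < v e)
        = insert y (Finset.univ.filter fun e : Fin N => x < e ∧ e < y ∧ v x < v e) := by
      ext e
      simp only [Finset.mem_insert, Finset.mem_filter, Finset.mem_univ, true_and]
      constructor
      · rintro ⟨h1, h2, h3⟩
        rcases eq_or_lt_of_le h2 with h | h
        · exact Or.inl h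
        · exact Or.inr ⟨h1, h, h3⟩
      · rintro (rfl | ⟨h1, h2, h3⟩)
        · exact ⟨hxy, le_refl _, hv⟩
        · exact ⟨h1, le_of_lt h2, h3⟩
    rw [hins, Finset.card_insert_of_notMem (by simp)]
  have hR2a' : (Finset.univ.filter fun e : Fin N => x < e ∧ e ≤ y ∧ v e < v x)
      = (Finset.univ.filter fun e : Fin N => x < e ∧ e < y ∧ v e < v x) := by
    ext e
    simp only [Finset.mem_filter, Finset.mem_univ, true_and]
    constructor
    · rintro ⟨h1, h2, h3⟩
      refine ⟨h1, lt_of_le_of_ne h2 ?_, h3⟩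
      rintro rfl
      exact absurd (h3.trans hv) (lt_irrefl _)
    · rintro ⟨h1, h2, h3⟩
      exact ⟨h1, le_of_lt h2, h3⟩
  -- Step G: pointwise sums over the middle interval
  have hE1 : (Finset.univ.filter fun e : Fin N => x < e ∧ e < y ∧ v x < v e)
      = (Finset.univ.filter fun e : Fin N => x < e ∧ e < y).filter fun e => v x < v e := by
    ext e
    simp only [Finset.mem_filter, Finset.mem_univ, true_and]
    tauto
  have hE2 : (Finset.univ.filter fun e : Fin N => x < e ∧ e < y ∧ v e < v y)
      = (Finset.univ.filter fun e : Fin N => x < e ∧ e < y).filter fun e => v e < v y := by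
    ext e
    simp only [Finset.mem_filter, Finset.mem_univ, true_and]
    tauto
  have hE3 : (Finset.univ.filter fun e : Fin N => x < e ∧ e < y ∧ v e < v x)
      = (Finset.univ.filter fun e : Fin N => x < e ∧ e < y).filter fun e => v e < v x := by
    ext e
    simp only [Finset.mem_filter, Finset.mem_univ, true_and]
    tauto
  have hE4 : (Finset.univ.filter fun e : Fin N => x < e ∧ e < y ∧ v y < v e)
      = (Finset.univ.filter fun e : Fin N => x < e ∧ e < y).filter fun e => v y < v e := by
    ext e
    simp only [Finset.mem_filter, Finset.mem_univ, true_and]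
    tauto
  have hE5 : (Finset.univ.filter fun e : Fin N => x < e ∧ e < y ∧ v x < v e ∧ v e < v y)
      = (Finset.univ.filter fun e : Fin N => x < e ∧ e < y).filter
          fun e => v x < v e ∧ v e < v y := by
    ext e
    simp only [Finset.mem_filter, Finset.mem_univ, true_and]
    tauto
  have hmemE : ∀ e ∈ (Finset.univ.filter fun e : Fin N => x < e ∧ e < y),
      v e ≠ v x ∧ v e ≠ v y := by
    intro e he
    simp only [Finset.mem_filter, Finset.mem_univ, true_and] at he
    exact ⟨fun hh => (ne_of_gt he.1) (hvInj hh), fun hh => (ne_of_lt he.2) (hvInj hh)⟩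
  have hsum1 : ((Finset.univ.filter fun e : Fin N => x < e ∧ e < y).filter
        fun e => v x < v e).card
      + ((Finset.univ.filter fun e : Fin N => x < e ∧ e < y).filter
        fun e => v e < v y).card
      = (Finset.univ.filter fun e : Fin N => x < e ∧ e < y).card
      + ((Finset.univ.filter fun e : Fin N => x < e ∧ e < y).filter
        fun e => v x < v e ∧ v e < v y).card := by
    rw [Finset.card_filter (fun e => v x < v e), Finset.card_filter (fun e => v e < v y),
      Finset.card_filter (fun e => v x < v e ∧ v e < v y),
      Finset.card_eq_sum_ones (Finset.univ.filter fun e : Fin N => x < e ∧ e < y),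
      ← Finset.sum_add_distrib, ← Finset.sum_add_distrib]
    apply Finset.sum_congr rfl
    intro e he
    exact (ite_tri hv (hmemE e he).1 (hmemE e he).2).1
  have hsum2 : ((Finset.univ.filter fun e : Fin N => x < e ∧ e < y).filter
        fun e => v e < v x).card
      + ((Finset.univ.filter fun e : Fin N => x < e ∧ e < y).filter
        fun e => v y < v e).card
      + ((Finset.univ.filter fun e : Fin N => x < e ∧ e < y).filter
        fun e => v x < v e ∧ v e < v y).card
      = (Finset.univ.filter fun e : Fin N => x < e ∧ e < y).card := by
    rw [Finset.card_filter (fun e => v e < v x), Finset.card_filter (fun e => v y < v e),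
      Finset.card_filter (fun e => v x < v e ∧ v e < v y),
      Finset.card_eq_sum_ones (Finset.univ.filter fun e : Fin N => x < e ∧ e < y),
      ← Finset.sum_add_distrib, ← Finset.sum_add_distrib]
    apply Finset.sum_congr rfl
    intro e he
    exact (ite_tri hv (hmemE e he).1 (hmemE e he).2).2
  -- Step H: assemble
  rw [hA, hlenv, hsplit1, hsplit2, hcommon, hR1, hR2, hsplitR1, hsplitR2,
    hR1a, hR1b, hR2a, hR2b, hinscard, hR2a', hE1, hE2, hE3, hE4, hE5]
  omega



lemma len_lt_of_val_lt (v : Equiv.Perm (Fin N)) {x y : Fin N} (hxy : x < y) (hv : v x < v y) :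
    len v < len (v * Equiv.swap x y) := by
  rw [len_mul_swap v hxy hv]; omega

lemma val_lt_of_len_lt (v : Equiv.Perm (Fin N)) {x y : Fin N} (hxy : x < y)
    (h : len v < len (v * Equiv.swap x y)) : v x < v y := by
  rcases lt_trichotomy (v x) (v y) with h1 | h1 | h1
  · exact h1
  · exact absurd (v.injective h1) (ne_of_lt hxy)
  · exfalso
    have h2 : (v * Equiv.swap x y) x < (v * Equiv.swap x y) y := by
      simpa [Equiv.Perm.mul_apply, Equiv.swap_apply_left, Equiv.swap_apply_right] using h1
    have h3 := len_lt_of_val_lt (v * Equiv.swap x y) hxy h2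
    rw [mul_assoc, Equiv.swap_mul_self, mul_one] at h3
    omega

lemma cov_iff_len (v : Equiv.Perm (Fin N)) {x y : Fin N} (hxy : x < y) :
    len (v * Equiv.swap x y) = len v + 1 ↔ Cov v x y := by
  constructor
  · intro h
    have hv : v x < v y := val_lt_of_len_lt v hxy (by omega)
    have h2 := len_mul_swap v hxy hv
    rw [h] at h2
    have h3 : (Finset.univ.filter fun e : Fin N => x < e ∧ e < y ∧ v x < v e ∧ v e < v y)
        = ∅ := Finset.card_eq_zero.mp (by omega)
    refine ⟨hv, fun e he1 he2 hve => ?_⟩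
    have hmem : e ∈ (Finset.univ.filter
        fun e : Fin N => x < e ∧ e < y ∧ v x < v e ∧ v e < v y) := by
      simp only [Finset.mem_filter, Finset.mem_univ, true_and]
      exact ⟨he1, he2, hve.1, hve.2⟩
    rw [h3] at hmem
    exact absurd hmem (Finset.notMem_empty e)
  · rintro ⟨hv, hcov⟩
    have h2 := len_mul_swap v hxy hv
    have h3 : (Finset.univ.filter
        fun e : Fin N => x < e ∧ e < y ∧ v x < v e ∧ v e < v y) = ∅ := by
      rw [Finset.filter_eq_empty_iff]
      intro e _
      intro hcon
      exact hcov e hcon.1 hcon.2.1 ⟨hcon.2.2.1, hcon.2.2.2⟩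
    rw [h3] at h2
    simpa using h2

lemma step_len_iff (v : Equiv.Perm (Fin N)) {k a b : ℕ} (ha : 1 ≤ a) (hak : a ≤ k)
    (hkb : k < b) (hbN : b ≤ N) :
    len (v * t N a b) = len v + 1 ↔ Cov v (pos N a) (pos N b) :=
  cov_iff_len v (pos_lt ha (lt_of_le_of_lt hak hkb) hbN)

lemma mul_t_apply_a (v : Equiv.Perm (Fin N)) (a b : ℕ) :
    (v * t N a b) (pos N a) = v (pos N b) := by
  simp [t, Equiv.Perm.mul_apply, Equiv.swap_apply_left]

lemma mul_t_apply_b (v : Equiv.Perm (Fin N)) (a b : ℕ) :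
    (v * t N a b) (pos N b) = v (pos N a) := by
  simp [t, Equiv.Perm.mul_apply, Equiv.swap_apply_right]

lemma mul_t_apply_other (v : Equiv.Perm (Fin N)) (a b : ℕ) {c : Fin N}
    (h1 : c ≠ pos N a) (h2 : c ≠ pos N b) : (v * t N a b) c = v c := by
  simp [t, Equiv.Perm.mul_apply, Equiv.swap_apply_of_ne_of_ne h1 h2]

lemma val_lt_iff (v : Equiv.Perm (Fin N)) (c d : ℕ) :
    val v c < val v d ↔ v (pos N c) < v (pos N d) := by
  simp only [val, Fin.lt_def]
  omega

section Chain

variable {k m : ℕ} {w : Equiv.Perm (Fin N)} {a b : ℕ → ℕ}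

lemma chain_step_len (hS : StepOK N k m w a b) {i : ℕ} (hi : i < m) :
    len (w * tProd N a b i * t N (a i) (b i)) = len (w * tProd N a b i) + 1 := by
  rw [mul_assoc, ← tProd_succ, hS.2 i (le_of_lt hi), hS.2 (i + 1) hi]
  omega

lemma chain_cov (hS : StepOK N k m w a b) {i : ℕ} (hi : i < m) :
    Cov (w * tProd N a b i) (pos N (a i)) (pos N (b i)) := by
  obtain ⟨h1, h2, h3, h4⟩ := hS.1 i hi
  exact (step_len_iff _ h1 h2 h3 h4).mp (chain_step_len hS hi)

lemma chain_val_lt (hS : StepOK N k m w a b) {i : ℕ} (hi : i < m) :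
    val (w * tProd N a b i) (a i) < val (w * tProd N a b i) (b i) :=
  (val_lt_iff _ _ _).mpr (chain_cov hS hi).1

lemma chain_label_val (hS : StepOK N k m w a b) {i : ℕ} (hi : i < m) :
    label w a b i = val (w * tProd N a b i) (b i) := by
  show val (w * tProd N a b (i + 1)) (a i) = _
  rw [tProd_succ, ← mul_assoc]
  unfold val
  rw [mul_t_apply_a]

lemma chain_val_const (hS : StepOK N k m w a b) {c i0 j : ℕ} (hc1 : 1 ≤ c) (hck : c ≤ k)
    (hi0 : i0 ≤ j) (hj : j ≤ m) (hfree : ∀ l, i0 ≤ l → l < j → a l ≠ c) :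
    val (w * tProd N a b j) c = val (w * tProd N a b i0) c := by
  induction j with
  | zero => rw [Nat.le_zero.mp hi0]
  | succ j ih =>
    rcases Nat.lt_or_ge i0 (j + 1) with hlt | hge
    · have hi0j : i0 ≤ j := by omega
      have hjm : j < m := by omega
      obtain ⟨hb1, hb2, hb3, hb4⟩ := hS.1 j hjm
      have hcN : c ≤ N := by omega
      have hne1 : pos N c ≠ pos N (a j) := by
        intro hcon
        exact hfree j hi0j (by omega) (pos_inj hc1 hcN hb1 (by omega) hcon).symm
      have hne2 : pos N c ≠ pos N (b j) := by
        intro hcon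
        have := pos_inj hc1 hcN (by omega : 1 ≤ b j) hb4 hcon
        omega
      have hstep : val (w * tProd N a b (j + 1)) c = val (w * tProd N a b j) c := by
        unfold val
        rw [tProd_succ, ← mul_assoc, mul_t_apply_other _ _ _ hne1 hne2]
      rw [hstep]
      exact ih hi0j (by omega) (fun l hl1 hl2 => hfree l hl1 (by omega))
    · have : i0 = j + 1 := by omega
      rw [this]

lemma chain_label_eq (hS : StepOK N k m w a b)
    (hdist : ∀ i j, i < m → j < m → i ≠ j → a i ≠ a j) {i : ℕ} (hi : i < m) :
    label w a b i = val (w * tProd N a b m) (a i) := by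
  obtain ⟨ha1, ha2, _, _⟩ := hS.1 i hi
  have h := chain_val_const hS (c := a i) (i0 := i + 1) (j := m) ha1 ha2 hi (le_refl m)
    (fun l hl1 hl2 => hdist l i hl2 hi (by omega))
  exact h.symm

lemma chain_val_untouched (hS : StepOK N k m w a b) {c : ℕ} (hc1 : 1 ≤ c) (hck : c ≤ k)
    (hfree : ∀ i, i < m → a i ≠ c) :
    val (w * tProd N a b m) c = val w c := by
  have h := chain_val_const hS (c := c) (i0 := 0) (j := m) hc1 hck (Nat.zero_le m)
    (le_refl m) (fun l _ hl2 => hfree l hl2)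
  rw [h]
  rfl

lemma dec_distinct (hS : StepOK N k m w a b)
    (hdec : ∀ i j, i < j → j < m → label w a b j < label w a b i) :
    ∀ i j, i < m → j < m → i ≠ j → a i ≠ a j := by
  have key : ∀ i j, i < j → j < m → a i ≠ a j := by
    intro i j hij hjm heq
    have hP : ∃ l, i < l ∧ l ≤ j ∧ a l = a i := ⟨j, hij, le_refl _, heq.symm⟩
    classical
    set l := Nat.find hP with hl
    obtain ⟨hl1, hl2, hl3⟩ := Nat.find_spec hP
    have hlm : l < m := by omega
    obtain ⟨ha1, ha2, _, _⟩ := hS.1 i (by omega)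
    have hconst : val (w * tProd N a b l) (a i) = val (w * tProd N a b (i + 1)) (a i) :=
      chain_val_const hS ha1 ha2 (by omega) (by omega)
        (fun p hp1 hp2 hcon => Nat.find_min hP hp2 ⟨by omega, by omega, hcon⟩)
    have hlbl : label w a b i < label w a b l := by
      rw [chain_label_val hS hlm]
      have h1 : label w a b i = val (w * tProd N a b l) (a l) := by
        show val (w * tProd N a b (i + 1)) (a i) = _
        rw [hl3, hconst]
      rw [h1]
      exact chain_val_lt hS hlm
    exact absurd (hdec i l hl1 hlm) (not_lt.mpr (le_of_lt hlbl))
  intro i j him hjm hne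
  rcases lt_or_gt_of_ne hne with h | h
  · exact key i j h hjm
  · exact (key j i h him).symm

end Chain



lemma diamond (u : Equiv.Perm (Fin N)) {p₁ q₁ p₂ q₂ : Fin N} (h1 : p₁ < q₁) (h2 : p₂ < q₂)
    (hd1 : p₁ ≠ p₂) (hd2 : p₁ ≠ q₂) (hd3 : q₁ ≠ p₂) (hd4 : q₁ ≠ q₂)
    (hC1 : Cov u p₁ q₁) (hC2 : Cov (u * Equiv.swap p₁ q₁) p₂ q₂) : Cov u p₂ q₂ := by
  have hup : ∀ e : Fin N, e ≠ p₁ → e ≠ q₁ → (u * Equiv.swap p₁ q₁) e = u e := by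
    intro e he1 he2
    simp [Equiv.Perm.mul_apply, Equiv.swap_apply_of_ne_of_ne he1 he2]
  have hup1 : (u * Equiv.swap p₁ q₁) p₁ = u q₁ := by
    simp [Equiv.Perm.mul_apply]
  have huq1 : (u * Equiv.swap p₁ q₁) q₁ = u p₁ := by
    simp [Equiv.Perm.mul_apply]
  have hp2 : (u * Equiv.swap p₁ q₁) p₂ = u p₂ := hup p₂ (Ne.symm hd1) (Ne.symm hd3)
  have hq2 : (u * Equiv.swap p₁ q₁) q₂ = u q₂ := hup q₂ (Ne.symm hd2) (Ne.symm hd4)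
  have hbase : u p₂ < u q₂ := by
    have h := hC2.1
    rwa [hp2, hq2] at h
  refine ⟨hbase, fun e hpe heq hcon => ?_⟩
  obtain ⟨hv1, hv2⟩ := hcon
  by_cases hep : e = p₁
  · subst hep
    have hA := hC2.2 e hpe heq
    rw [hp2, hq2, hup1] at hA
    have h3 : u p₂ < u q₁ := lt_trans hv1 hC1.1
    have h4 : ¬ u q₁ < u q₂ := fun hh => hA ⟨h3, hh⟩
    have hq2q1 : u q₂ < u q₁ :=
      lt_of_le_of_ne (not_lt.mp h4) (fun hh => hd4 (u.injective hh).symm)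
    rcases lt_or_gt_of_ne hd4 with hq | hq
    · have hB := hC2.2 q₁ (lt_trans hpe h1) hq
      rw [hp2, hq2, huq1] at hB
      exact hB ⟨hv1, hv2⟩
    · exact hC1.2 q₂ heq hq ⟨hv2, hq2q1⟩
  · by_cases heq1 : e = q₁
    · subst heq1
      rcases lt_or_gt_of_ne hd1 with hp | hp
      · have hB := hC1.2 p₂ hp hpe
        have hup2 : u p₂ < u p₁ :=
          lt_of_le_of_ne (not_lt.mp (fun hh => hB ⟨hh, hv1⟩))
            (fun hh => hd1 (u.injective hh).symm)
        have hC := hC2.2 e hpe heq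
        rw [hp2, hq2, huq1] at hC
        exact hC ⟨hup2, lt_trans hC1.1 hv2⟩
      · have hB := hC2.2 p₁ hp (lt_trans h1 heq)
        rw [hp2, hq2, hup1] at hB
        exact hB ⟨hv1, hv2⟩
    · have hB := hC2.2 e hpe heq
      rw [hp2, hq2, hup e hep heq1] at hB
      exact hB ⟨hv1, hv2⟩

lemma swap_comm_of_ne {x y z w : Fin N} (h1 : x ≠ z) (h2 : x ≠ w) (h3 : y ≠ z) (h4 : y ≠ w) :
    Equiv.swap x y * Equiv.swap z w = Equiv.swap z w * Equiv.swap x y := by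
  ext e
  simp only [Equiv.Perm.mul_apply, Equiv.swap_apply_def]
  have e1 : (x:ℕ) ≠ z := fun h => h1 (Fin.ext h)
  have e2 : (x:ℕ) ≠ w := fun h => h2 (Fin.ext h)
  have e3 : (y:ℕ) ≠ z := fun h => h3 (Fin.ext h)
  have e4 : (y:ℕ) ≠ w := fun h => h4 (Fin.ext h)
  split_ifs <;> simp only [Fin.ext_iff] at * <;> omega

/-- The adjacent transposition on indices. -/
def tau (i : ℕ) : ℕ → ℕ := fun j => if j = i then i + 1 else if j = i + 1 then i else j

lemma tau_inj (i : ℕ) : ∀ x y, tau i x = tau i y → x = y := by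
  intro x y
  unfold tau
  split_ifs <;> omega

lemma invcount_swap_lt {f : ℕ → ℕ} {m i : ℕ} (hi : i + 1 < m) (hasc : f i < f (i + 1)) :
    ((Finset.range m ×ˢ Finset.range m).filter
        fun p => p.1 < p.2 ∧ f (tau i p.1) < f (tau i p.2)).card
      < ((Finset.range m ×ˢ Finset.range m).filter
        fun p => p.1 < p.2 ∧ f p.1 < f p.2).card := by
  classical
  have hmem : (i, i + 1) ∈ (Finset.range m ×ˢ Finset.range m).filter
      (fun p => p.1 < p.2 ∧ f p.1 < f p.2) := by
    simp only [Finset.mem_filter, Finset.mem_product, Finset.mem_range]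
    exact ⟨⟨by omega, hi⟩, by omega, hasc⟩
  have hle : ((Finset.range m ×ˢ Finset.range m).filter
        fun p => p.1 < p.2 ∧ f (tau i p.1) < f (tau i p.2)).card
      ≤ (((Finset.range m ×ˢ Finset.range m).filter
        fun p => p.1 < p.2 ∧ f p.1 < f p.2).erase (i, i + 1)).card := by
    apply Finset.card_le_card_of_injOn (fun p => (tau i p.1, tau i p.2))
    · intro p hp
      simp only [Finset.mem_coe, Finset.mem_filter, Finset.mem_product, Finset.mem_range,
        Finset.mem_erase] at hp ⊢
      obtain ⟨⟨hp1, hp2⟩, hp3, hp4⟩ := hp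
      have hne : ¬(p.1 = i ∧ p.2 = i + 1) := by
        rintro ⟨hh1, hh2⟩
        rw [hh1, hh2] at hp4
        have ht1 : tau i i = i + 1 := by unfold tau; rw [if_pos rfl]
        have ht2 : tau i (i + 1) = i := by unfold tau; rw [if_neg (by omega), if_pos rfl]
        rw [ht1, ht2] at hp4
        omega
      refine ⟨?_, ⟨?_, ?_⟩, ?_, hp4⟩
      · intro hcon
        have hc := Prod.ext_iff.mp hcon
        simp only at hc
        have h1 : p.1 = i + 1 := by
          have := hc.1; unfold tau at this; split_ifs at this <;> omega
        have h2 : p.2 = i := by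
          have := hc.2; unfold tau at this; split_ifs at this <;> omega
        omega
      · unfold tau; split_ifs <;> omega
      · unfold tau; split_ifs <;> omega
      · unfold tau; split_ifs <;> omega
    · intro p hp q hq hpq
      have h1 := (Prod.ext_iff.mp hpq).1
      have h2 := (Prod.ext_iff.mp hpq).2
      simp only at h1 h2
      exact Prod.ext (tau_inj i _ _ h1) (tau_inj i _ _ h2)
  calc ((Finset.range m ×ˢ Finset.range m).filter
        fun p => p.1 < p.2 ∧ f (tau i p.1) < f (tau i p.2)).card
      ≤ _ := hle
    _ < _ := Finset.card_erase_lt_of_mem hmem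


section Swap

variable {k m : ℕ} {w : Equiv.Perm (Fin N)} {a b : ℕ → ℕ}

lemma tau_lt_iff {i m j : ℕ} (hi : i + 1 < m) : tau i j < m ↔ j < m := by
  unfold tau; split_ifs <;> omega

lemma tau_small {i j : ℕ} (h : j < i) : tau i j = j := by
  unfold tau; split_ifs <;> omega

lemma tau_big {i j : ℕ} (h : i + 2 ≤ j) : tau i j = j := by
  unfold tau; split_ifs <;> omega

lemma tau_at (i : ℕ) : tau i i = i + 1 := by
  unfold tau; rw [if_pos rfl]

lemma tau_at1 (i : ℕ) : tau i (i + 1) = i := by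
  unfold tau; rw [if_neg (by omega), if_pos rfl]

lemma chain_swap (hS : StepOK N k m w a b)
    (hdist : ∀ i j, i < m → j < m → i ≠ j → a i ≠ a j) {i : ℕ} (hi : i + 1 < m)
    (hasc : label w a b i < label w a b (i + 1)) :
    StepOK N k m w (a ∘ tau i) (b ∘ tau i) ∧
      (∀ j, i + 2 ≤ j → tProd N (a ∘ tau i) (b ∘ tau i) j = tProd N a b j) := by
  have hii : i < m := by omega
  obtain ⟨hai1, hai2, hbi1, hbi2⟩ := hS.1 i hii
  obtain ⟨haj1, haj2, hbj1, hbj2⟩ := hS.1 (i + 1) hi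
  have hane : a i ≠ a (i + 1) := hdist i (i + 1) hii hi (by omega)
  have hbne : b i ≠ b (i + 1) := by
    intro hbb
    have h1 : label w a b (i + 1) = val (w * tProd N a b (i + 1)) (b (i + 1)) :=
      chain_label_val hS hi
    rw [← hbb] at h1
    have h2 : val (w * tProd N a b (i + 1)) (b i) = val (w * tProd N a b i) (a i) := by
      unfold val
      rw [tProd_succ, ← mul_assoc, mul_t_apply_b]
    have h3 : label w a b i = val (w * tProd N a b i) (b i) := chain_label_val hS hii
    have h4 := chain_val_lt hS hii
    omega
  -- position facts
  have ppa : pos N (a i) ≠ pos N (a (i + 1)) :=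
    fun h => hane (pos_inj hai1 (by omega) haj1 (by omega) h)
  have pab1 : pos N (a i) < pos N (b i) := pos_lt hai1 (by omega) hbi2
  have pab2 : pos N (a (i + 1)) < pos N (b (i + 1)) := pos_lt haj1 (by omega) hbj2
  have pq12 : pos N (a i) ≠ pos N (b (i + 1)) :=
    ne_of_lt (pos_lt hai1 (by omega) hbj2)
  have pq21 : pos N (a (i + 1)) ≠ pos N (b i) :=
    ne_of_lt (pos_lt haj1 (by omega) hbi2)
  have qq : pos N (b i) ≠ pos N (b (i + 1)) :=
    fun h => hbne (pos_inj (by omega) hbi2 (by omega) hbj2 h)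
  have hcomm : t N (a i) (b i) * t N (a (i + 1)) (b (i + 1))
      = t N (a (i + 1)) (b (i + 1)) * t N (a i) (b i) :=
    swap_comm_of_ne ppa pq12 (Ne.symm pq21) qq
  have hC2 : Cov (w * tProd N a b i * t N (a i) (b i)) (pos N (a (i + 1)))
      (pos N (b (i + 1))) := by
    have h := chain_cov hS hi
    rwa [tProd_succ, ← mul_assoc] at h
  have hdiam : Cov (w * tProd N a b i) (pos N (a (i + 1))) (pos N (b (i + 1))) :=
    diamond _ pab1 pab2 ppa pq12 (Ne.symm pq21) qq (chain_cov hS hii) hC2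
  -- product equalities
  have e1 : ∀ j, j ≤ i → tProd N (a ∘ tau i) (b ∘ tau i) j = tProd N a b j := by
    intro j hj
    exact tProd_congr fun l hl => by
      have h := tau_small (show l < i by omega)
      constructor <;> simp [Function.comp, h]
  have hca : (a ∘ tau i) i = a (i + 1) := by simp [Function.comp, tau_at]
  have hcb : (b ∘ tau i) i = b (i + 1) := by simp [Function.comp, tau_at]
  have hca1 : (a ∘ tau i) (i + 1) = a i := by simp [Function.comp, tau_at1]
  have hcb1 : (b ∘ tau i) (i + 1) = b i := by simp [Function.comp, tau_at1]
  have e2 : tProd N (a ∘ tau i) (b ∘ tau i) (i + 1)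
      = tProd N a b i * t N (a (i + 1)) (b (i + 1)) := by
    rw [tProd_succ, e1 i (le_refl i), hca, hcb]
  have e3 : tProd N (a ∘ tau i) (b ∘ tau i) (i + 2) = tProd N a b (i + 2) := by
    rw [tProd_succ, e2, hca1, hcb1, tProd_succ, tProd_succ, mul_assoc, mul_assoc, ← hcomm]
  have e4 : ∀ d, tProd N (a ∘ tau i) (b ∘ tau i) (i + 2 + d) = tProd N a b (i + 2 + d) := by
    intro d
    induction d with
    | zero => exact e3
    | succ d ih =>
      have hshift : i + 2 + (d + 1) = (i + 2 + d) + 1 := by omega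
      rw [hshift, tProd_succ, tProd_succ, ih]
      have h := tau_big (show i + 2 ≤ i + 2 + d by omega)
      simp [Function.comp, h]
  have e5 : ∀ j, i + 2 ≤ j → tProd N (a ∘ tau i) (b ∘ tau i) j = tProd N a b j := by
    intro j hj
    obtain ⟨d, rfl⟩ : ∃ d, j = i + 2 + d := ⟨j - (i + 2), by omega⟩
    exact e4 d
  refine ⟨⟨?_, ?_⟩, e5⟩
  · intro j hj
    exact hS.1 (tau i j) ((tau_lt_iff hi).mpr hj)
  · intro j hj
    rcases Nat.lt_or_ge j (i + 1) with hc | hc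
    · rw [e1 j (by omega)]
      exact hS.2 j hj
    · rcases Nat.eq_or_lt_of_le hc with hc2 | hc2
      · rw [← hc2, e2, ← mul_assoc]
        have hlen := (step_len_iff (w * tProd N a b i) haj1 haj2 hbj1 hbj2).mpr hdiam
        rw [hlen, hS.2 i (by omega)]
        omega
      · rw [e5 j (by omega)]
        exact hS.2 j hj

end Swap



lemma val_inj (v : Equiv.Perm (Fin N)) {c d : ℕ} (hc1 : 1 ≤ c) (hcN : c ≤ N)
    (hd1 : 1 ≤ d) (hdN : d ≤ N) (h : val v c = val v d) : c = d := by
  unfold val at h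
  have h2 : v (pos N c) = v (pos N d) := Fin.ext (by omega)
  exact pos_inj hc1 hcN hd1 hdN (v.injective h2)

set_option maxHeartbeats 1000000 in
lemma exists_dec_aux {k m : ℕ} {w w' : Equiv.Perm (Fin N)} (fuel : ℕ) :
    ∀ a b : ℕ → ℕ, StepOK N k m w a b →
    (∀ i j, i < m → j < m → i ≠ j → a i ≠ a j) →
    (∀ j, m ≤ j → a j = 0 ∧ b j = 0) →
    w' = w * tProd N a b m →
    ((Finset.range m ×ˢ Finset.range m).filter fun p =>
      p.1 < p.2 ∧ val w' (a p.1) < val w' (a p.2)).card < fuel →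
    (DecPaths N k m w w').Nonempty := by
  induction fuel with
  | zero => intro a b _ _ _ _ h; omega
  | succ fuel ih =>
    intro a b hS hdist hnorm hw' hcard
    by_cases hasc : ∃ i, i + 1 < m ∧ val w' (a i) < val w' (a (i + 1))
    · obtain ⟨i, hi, hivals⟩ := hasc
      have hasc' : label w a b i < label w a b (i + 1) := by
        rw [chain_label_eq hS hdist (by omega : i < m), chain_label_eq hS hdist hi, ← hw']
        exact hivals
      obtain ⟨hS', hprod⟩ := chain_swap hS hdist hi hasc'
      have hdist' : ∀ p q, p < m → q < m → p ≠ q → (a ∘ tau i) p ≠ (a ∘ tau i) q := by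
        intro p q hp hq hne
        exact hdist _ _ ((tau_lt_iff hi).mpr hp) ((tau_lt_iff hi).mpr hq)
          (fun h => hne (tau_inj i _ _ h))
      have hnorm' : ∀ j, m ≤ j → (a ∘ tau i) j = 0 ∧ (b ∘ tau i) j = 0 := by
        intro j hj
        have ht := tau_big (show i + 2 ≤ j by omega)
        simp only [Function.comp_apply, ht]
        exact hnorm j hj
      have hend : w' = w * tProd N (a ∘ tau i) (b ∘ tau i) m := by
        rw [hprod m (by omega)]
        exact hw'
      have hcard' : ((Finset.range m ×ˢ Finset.range m).filter fun p =>
          p.1 < p.2 ∧ val w' ((a ∘ tau i) p.1) < val w' ((a ∘ tau i) p.2)).card < fuel := by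
        simp only [Function.comp_apply]
        exact lt_of_lt_of_le (invcount_swap_lt (f := fun j => val w' (a j)) hi hivals)
          (Nat.lt_succ_iff.mp hcard)
      exact ih (a ∘ tau i) (b ∘ tau i) hS' hdist' hnorm' hend hcard'
    · push_neg at hasc
      have hne : ∀ p q, p < m → q < m → p ≠ q → val w' (a p) ≠ val w' (a q) := by
        intro p q hp hq hpq hcon
        obtain ⟨h1p, h2p, h3p, h4p⟩ := hS.1 p hp
        obtain ⟨h1q, h2q, h3q, h4q⟩ := hS.1 q hq
        exact hdist p q hp hq hpq (val_inj _ h1p (by omega) h1q (by omega) hcon)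
      have hstep : ∀ p, p + 1 < m → val w' (a (p + 1)) < val w' (a p) :=
        fun p hp => lt_of_le_of_ne (hasc p hp) (hne (p + 1) p hp (by omega) (by omega))
      have hdec : ∀ p q, p < q → q < m → val w' (a q) < val w' (a p) := by
        intro p q hpq hq
        induction q with
        | zero => omega
        | succ q ihq =>
          rcases Nat.lt_or_ge p q with h | h
          · exact lt_trans (hstep q hq) (ihq h (by omega))
          · have hpq2 : p = q := by omega
            rw [hpq2]
            exact hstep q hq
      refine ⟨(a, b), ⟨⟨hS, hw', fun j hj => hnorm j hj⟩, ?_⟩⟩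
      intro p q hpq hq
      rw [chain_label_eq hS hdist hq, chain_label_eq hS hdist (by omega : p < m), ← hw']
      exact hdec p q hpq hq

set_option maxHeartbeats 1000000 in
lemma relC_mp {k m : ℕ} {w w' : Equiv.Perm (Fin N)} (h : RelC N k m w w') :
    (DecPaths N k m w w').Nonempty := by
  obtain ⟨a, b, hS, hw', hdist⟩ := h
  have hprod : ∀ i, i ≤ m → tProd N (fun j => if j < m then a j else 0)
      (fun j => if j < m then b j else 0) i = tProd N a b i := by
    intro i hi
    refine tProd_congr fun l hl => ?_
    rw [if_pos (by omega), if_pos (by omega)]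
    exact ⟨rfl, rfl⟩
  have hS0 : StepOK N k m w (fun j => if j < m then a j else 0)
      (fun j => if j < m then b j else 0) := by
    constructor
    · intro i hi
      simp only [if_pos hi]
      exact hS.1 i hi
    · intro i hi
      rw [hprod i hi]
      exact hS.2 i hi
  have hdist0 : ∀ i j, i < m → j < m → i ≠ j →
      (if i < m then a i else 0) ≠ (if j < m then a j else 0) := by
    intro i j hi hj hne
    simp only [if_pos hi, if_pos hj]
    exact hdist i j hi hj hne
  have hnorm0 : ∀ j, m ≤ j → (if j < m then a j else 0) = 0 ∧
      (if j < m then b j else 0) = 0 := by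
    intro j hj
    rw [if_neg (by omega), if_neg (by omega)]
    exact ⟨rfl, rfl⟩
  have hend : w' = w * tProd N (fun j => if j < m then a j else 0)
      (fun j => if j < m then b j else 0) m := by
    rw [hprod m (le_refl m)]
    exact hw'
  exact exists_dec_aux
    (((Finset.range m ×ˢ Finset.range m).filter fun p =>
      (p.1 < p.2 ∧ val w' ((fun j => if j < m then a j else 0) p.1)
        < val w' ((fun j => if j < m then a j else 0) p.2))).card + 1)
    (fun j => if j < m then a j else 0) (fun j => if j < m then b j else 0)
    hS0 hdist0 hnorm0 hend (Nat.lt_succ_self _)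

lemma relC_mpr {k m : ℕ} {w w' : Equiv.Perm (Fin N)} (h : (DecPaths N k m w w').Nonempty) :
    RelC N k m w w' := by
  obtain ⟨⟨a, b⟩, ⟨⟨hS, hw', hnorm⟩, hdec⟩⟩ := h
  exact ⟨a, b, hS, hw', dec_distinct hS hdec⟩



lemma tProd_one (a b : ℕ → ℕ) : tProd N a b 1 = t N (a 0) (b 0) := by
  rw [tProd_succ, tProd_zero, one_mul]

lemma label0_le {k m : ℕ} {w w' : Equiv.Perm (Fin N)} (hm : 0 < m)
    {a₁ b₁ a₂ b₂ : ℕ → ℕ}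
    (hS1 : StepOK N k m w a₁ b₁) (hw1 : w' = w * tProd N a₁ b₁ m)
    (hdec1 : ∀ i j, i < j → j < m → label w a₁ b₁ j < label w a₁ b₁ i)
    (hS2 : StepOK N k m w a₂ b₂) (hw2 : w' = w * tProd N a₂ b₂ m)
    (hdec2 : ∀ i j, i < j → j < m → label w a₂ b₂ j < label w a₂ b₂ i) :
    label w a₁ b₁ 0 ≤ label w a₂ b₂ 0 := by
  have hd1 := dec_distinct hS1 hdec1
  have hd2 := dec_distinct hS2 hdec2
  obtain ⟨h1, h2, h3, h4⟩ := hS1.1 0 hm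
  have h0p : w * tProd N a₁ b₁ 0 = w := by rw [tProd_zero, mul_one]
  have hv : label w a₁ b₁ 0 = val w' (a₁ 0) := by
    rw [chain_label_eq hS1 hd1 hm, ← hw1]
  have hvw : label w a₁ b₁ 0 = val w (b₁ 0) := by
    rw [chain_label_val hS1 hm, h0p]
  have hlt : val w (a₁ 0) < label w a₁ b₁ 0 := by
    rw [hvw]
    have hcv := chain_val_lt hS1 hm
    rwa [h0p] at hcv
  have htouch : ∃ i, i < m ∧ a₂ i = a₁ 0 := by
    by_contra hcon
    push_neg at hcon
    have hu := chain_val_untouched hS2 h1 h2 (fun i hi => hcon i hi)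
    rw [← hw2] at hu
    omega
  obtain ⟨i, him, hieq⟩ := htouch
  have hvy : label w a₂ b₂ i = label w a₁ b₁ 0 := by
    rw [chain_label_eq hS2 hd2 him, ← hw2, hieq, ← hv]
  rcases Nat.eq_zero_or_pos i with rfl | hipos
  · omega
  · have := hdec2 0 i hipos him
    omega

lemma dec_first_eq {k m : ℕ} {w w' : Equiv.Perm (Fin N)} (hm : 0 < m)
    {a₁ b₁ a₂ b₂ : ℕ → ℕ}
    (hS1 : StepOK N k m w a₁ b₁) (hw1 : w' = w * tProd N a₁ b₁ m)
    (hdec1 : ∀ i j, i < j → j < m → label w a₁ b₁ j < label w a₁ b₁ i)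
    (hS2 : StepOK N k m w a₂ b₂) (hw2 : w' = w * tProd N a₂ b₂ m)
    (hdec2 : ∀ i j, i < j → j < m → label w a₂ b₂ j < label w a₂ b₂ i) :
    a₁ 0 = a₂ 0 ∧ b₁ 0 = b₂ 0 := by
  have e1 := label0_le hm hS1 hw1 hdec1 hS2 hw2 hdec2
  have e2 := label0_le hm hS2 hw2 hdec2 hS1 hw1 hdec1
  have hd1 := dec_distinct hS1 hdec1
  have hd2 := dec_distinct hS2 hdec2
  obtain ⟨h11, h12, h13, h14⟩ := hS1.1 0 hm
  obtain ⟨h21, h22, h23, h24⟩ := hS2.1 0 hm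
  have h0p1 : w * tProd N a₁ b₁ 0 = w := by rw [tProd_zero, mul_one]
  have h0p2 : w * tProd N a₂ b₂ 0 = w := by rw [tProd_zero, mul_one]
  have hv1 : label w a₁ b₁ 0 = val w' (a₁ 0) := by
    rw [chain_label_eq hS1 hd1 hm, ← hw1]
  have hv2 : label w a₂ b₂ 0 = val w' (a₂ 0) := by
    rw [chain_label_eq hS2 hd2 hm, ← hw2]
  have hvw1 : label w a₁ b₁ 0 = val w (b₁ 0) := by
    rw [chain_label_val hS1 hm, h0p1]
  have hvw2 : label w a₂ b₂ 0 = val w (b₂ 0) := by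
    rw [chain_label_val hS2 hm, h0p2]
  constructor
  · exact val_inj w' h11 (by omega) h21 (by omega) (by omega)
  · exact val_inj w (by omega) h14 (by omega) h24 (by omega)

lemma shift_mem {k m : ℕ} {w w' : Equiv.Perm (Fin N)} {a b : ℕ → ℕ}
    (hS : StepOK N k (m + 1) w a b) (hw' : w' = w * tProd N a b (m + 1))
    (hdec : ∀ i j, i < j → j < m + 1 → label w a b j < label w a b i) :
    ((fun j => if j < m then a (j + 1) else 0, fun j => if j < m then b (j + 1) else 0)
        : (ℕ → ℕ) × (ℕ → ℕ))
      ∈ DecPaths N k m (w * t N (a 0) (b 0)) w' := by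
  have hsp : ∀ i, i ≤ m → (w * t N (a 0) (b 0)) * tProd N
      (fun j => if j < m then a (j + 1) else 0) (fun j => if j < m then b (j + 1) else 0) i
      = w * tProd N a b (i + 1) := by
    intro i hi
    have hcong : tProd N (fun j => if j < m then a (j + 1) else 0)
        (fun j => if j < m then b (j + 1) else 0) i
        = tProd N (fun j => a (j + 1)) (fun j => b (j + 1)) i := by
      refine tProd_congr fun l hl => ?_
      rw [if_pos (by omega), if_pos (by omega)]
      exact ⟨rfl, rfl⟩
    rw [hcong, tProd_shift, ← mul_assoc]
  have hlen1 : len (w * t N (a 0) (b 0)) = len w + 1 := by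
    have h := hS.2 1 (by omega)
    rwa [tProd_one] at h
  have hSnew : StepOK N k m (w * t N (a 0) (b 0))
      (fun j => if j < m then a (j + 1) else 0) (fun j => if j < m then b (j + 1) else 0) := by
    constructor
    · intro i hi
      simp only [if_pos hi]
      exact hS.1 (i + 1) (by omega)
    · intro i hi
      rw [hsp i hi, hS.2 (i + 1) (by omega), hlen1]
      omega
  have hlab : ∀ p, p < m → label (w * t N (a 0) (b 0))
      (fun j => if j < m then a (j + 1) else 0) (fun j => if j < m then b (j + 1) else 0) p
      = label w a b (p + 1) := by
    intro p hp
    show val ((w * t N (a 0) (b 0)) * tProd N _ _ (p + 1)) (if p < m then a (p + 1) else 0)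
      = val (w * tProd N a b (p + 2)) (a (p + 1))
    rw [hsp (p + 1) hp, if_pos hp]
  refine ⟨⟨hSnew, ?_, ?_⟩, ?_⟩
  · rw [hsp m (le_refl m), ← hw']
  · intro i hi
    refine ⟨?_, ?_⟩
    · show (if i < m then a (i + 1) else 0) = 0
      rw [if_neg (by omega)]
    · show (if i < m then b (i + 1) else 0) = 0
      rw [if_neg (by omega)]
  · intro i j hij hjm
    rw [hlab i (by omega), hlab j hjm]
    exact hdec (i + 1) (j + 1) (by omega) (by omega)

lemma dec_unique {k : ℕ} {w' : Equiv.Perm (Fin N)} :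
    ∀ (m : ℕ) (w : Equiv.Perm (Fin N)) (x y : (ℕ → ℕ) × (ℕ → ℕ)),
      x ∈ DecPaths N k m w w' → y ∈ DecPaths N k m w w' → x = y := by
  intro m
  induction m with
  | zero =>
    intro w x y hx hy
    obtain ⟨⟨_, _, hnx⟩, _⟩ := hx
    obtain ⟨⟨_, _, hny⟩, _⟩ := hy
    exact Prod.ext
      (funext fun i => ((hnx i (Nat.zero_le i)).1).trans ((hny i (Nat.zero_le i)).1).symm)
      (funext fun i => ((hnx i (Nat.zero_le i)).2).trans ((hny i (Nat.zero_le i)).2).symm)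
  | succ m ihm =>
    intro w x y hx hy
    obtain ⟨⟨hSx, hwx, hnx⟩, hdecx⟩ := hx
    obtain ⟨⟨hSy, hwy, hny⟩, hdecy⟩ := hy
    have h0 := dec_first_eq (Nat.succ_pos m) hSx hwx hdecx hSy hwy hdecy
    have hx' := shift_mem hSx hwx hdecx
    have hy' := shift_mem hSy hwy hdecy
    rw [h0.1, h0.2] at hx'
    have heq := ihm (w * t N (y.1 0) (y.2 0)) _ _ hx' hy'
    have ha : ∀ j : ℕ, (if j < m then x.1 (j + 1) else 0)
        = (if j < m then y.1 (j + 1) else 0) := fun j =>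
      congrFun (congrArg Prod.fst heq) j
    have hb : ∀ j : ℕ, (if j < m then x.2 (j + 1) else 0)
        = (if j < m then y.2 (j + 1) else 0) := fun j =>
      congrFun (congrArg Prod.snd heq) j
    refine Prod.ext (funext fun i => ?_) (funext fun i => ?_)
    · match i with
      | 0 => exact h0.1
      | (j + 1) =>
        rcases Nat.lt_or_ge j m with hj | hj
        · have := ha j
          rwa [if_pos hj, if_pos hj] at this
        · rw [(hnx (j + 1) (by omega)).1, (hny (j + 1) (by omega)).1]
    · match i with
      | 0 => exact h0.2
      | (j + 1) =>
        rcases Nat.lt_or_ge j m with hj | hj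
        · have := hb j
          rwa [if_pos hj, if_pos hj] at this
        · rw [(hnx (j + 1) (by omega)).2, (hny (j + 1) (by omega)).2]


end ProofDev

/-- `w →_{c[k,m]} w'` iff there is a path of length `m` in the `k`-Bruhat order from
`w` to `w'` with strictly decreasing labels; moreover such a path is unique
(paths being encoded by their normalized sequences of transpositions; here the
paper's `n` is `n+1`). -/
theorem relC_iff_decreasing_path (n k m : ℕ) (hk : 1 ≤ k) (hm : 1 ≤ m)
    (w w' : Equiv.Perm (Fin (n + 1))) :
    (RelC (n + 1) k m w w' ↔ (DecPaths (n + 1) k m w w').Nonempty) ∧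
      (∀ x ∈ DecPaths (n + 1) k m w w', ∀ y ∈ DecPaths (n + 1) k m w w', x = y) := by
  refine ⟨⟨relC_mp, relC_mpr⟩, fun x hx y hy => dec_unique m w x y hx hy⟩

end SchubertPieri
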